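/- Let R ≼ R' in IRel_m and S ≼ S' in IRel_n. Then {T ∈ IRel_{m+n} : underprod(R,S) ≼ T ≼ overprod(R',S')} = ⋃ (U ⧢ V), where the union is over all U ∈ IRel_m with R ≼ U ≼ R' and all V ∈ IRel_n with S ≼ V ≼ S'; moreover this union is disjoint: every T in the left-hand set belongs to U ⧢ V for exactly one pair (U,V), namely U = T_{[m]} and V = T_{[n̄]}. -/
import Mathlib


namespace IntegerRelations

/-- An integer relation of size `p` is a reflexive binary relation on `Fin p`,
encoded as a set of pairs; `IsIRel R` says that `R` is reflexive. -/
def IsIRel {p : ℕ} (R : Set (Fin p × Fin p)) : Prop :=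
  ∀ i : Fin p, (i, i) ∈ R

/-- The increasing subrelation `Inc R`. -/
def inc {p : ℕ} (R : Set (Fin p × Fin p)) : Set (Fin p × Fin p) :=
  {x ∈ R | x.1 < x.2}

/-- The decreasing subrelation `Dec R`. -/
def dec {p : ℕ} (R : Set (Fin p × Fin p)) : Set (Fin p × Fin p) :=
  {x ∈ R | x.2 < x.1}

/-- The weak order: `R ≼ S` iff `Inc R ⊇ Inc S` and `Dec R ⊆ Dec S`. -/
def WOle {p : ℕ} (R S : Set (Fin p × Fin p)) : Prop :=
  inc S ⊆ inc R ∧ dec R ⊆ dec S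

/-- Standardized restriction of a relation to a subset `X` of cardinality `k`. -/
def restrict {p k : ℕ} (R : Set (Fin p × Fin p)) (X : Finset (Fin p))
    (h : X.card = k) : Set (Fin k × Fin k) :=
  {x | ((X.orderIsoOfFin h x.1 : Fin p), (X.orderIsoOfFin h x.2 : Fin p)) ∈ R}

/-- Standardized restriction of a relation to the block of `k` consecutive
positions starting at offset `o` (`0`-indexed). -/
def restrictRange {p : ℕ} (R : Set (Fin p × Fin p)) (o k : ℕ) :
    Set (Fin k × Fin k) :=
  {x | ∃ (h₁ : o + (x.1 : ℕ) < p) (h₂ : o + (x.2 : ℕ) < p),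
      ((⟨o + (x.1 : ℕ), h₁⟩ : Fin p), (⟨o + (x.2 : ℕ), h₂⟩ : Fin p)) ∈ R}

/-- The relation `R` placed on the first `m` values of `[m+n]`. -/
def shiftL {m n : ℕ} (R : Set (Fin m × Fin m)) :
    Set (Fin (m + n) × Fin (m + n)) :=
  {x | ∃ y ∈ R, x = (Fin.castAdd n y.1, Fin.castAdd n y.2)}

/-- The relation `S` shifted to the last `n` values of `[m+n]`. -/
def shiftR {m n : ℕ} (S : Set (Fin n × Fin n)) :
    Set (Fin (m + n) × Fin (m + n)) :=
  {x | ∃ y ∈ S, x = (Fin.natAdd m y.1, Fin.natAdd m y.2)}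

/-- The full block `[m] × [n̄]`. -/
def lowHigh (m n : ℕ) : Set (Fin (m + n) × Fin (m + n)) :=
  {x | (x.1 : ℕ) < m ∧ m ≤ (x.2 : ℕ)}

/-- The full block `[n̄] × [m]`. -/
def highLow (m n : ℕ) : Set (Fin (m + n) × Fin (m + n)) :=
  {x | m ≤ (x.1 : ℕ) ∧ (x.2 : ℕ) < m}

/-- The shifted shuffle `R ⧢ S` of two integer relations. -/
def shiftedShuffle {m n : ℕ} (R : Set (Fin m × Fin m)) (S : Set (Fin n × Fin n)) :
    Set (Set (Fin (m + n) × Fin (m + n))) :=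
  {T | ∃ I D : Set (Fin (m + n) × Fin (m + n)),
      I ⊆ lowHigh m n ∧ D ⊆ highLow m n ∧
      T = shiftL R ∪ shiftR S ∪ I ∪ D}

/-- `underprod R S = R ∪ S̄ ∪ ([m] × [n̄])`. -/
def underprod {m n : ℕ} (R : Set (Fin m × Fin m)) (S : Set (Fin n × Fin n)) :
    Set (Fin (m + n) × Fin (m + n)) :=
  shiftL R ∪ shiftR S ∪ lowHigh m n

/-- `overprod R S = R ∪ S̄ ∪ ([n̄] × [m])`. -/
def overprod {m n : ℕ} (R : Set (Fin m × Fin m)) (S : Set (Fin n × Fin n)) :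
    Set (Fin (m + n) × Fin (m + n)) :=
  shiftL R ∪ shiftR S ∪ highLow m n

/-- A total cut `(X, Y)` of a relation `T`. -/
def IsTotalCut {p : ℕ} (T : Set (Fin p × Fin p)) (X Y : Finset (Fin p)) : Prop :=
  (∀ i : Fin p, i ∈ X ∨ i ∈ Y) ∧ Disjoint X Y ∧
    ∀ x ∈ X, ∀ y ∈ Y, (x, y) ∈ T ∧ (y, x) ∉ T

/-- The convolution `R ∗ S` of two integer relations. -/
def convolution {m n : ℕ} (R : Set (Fin m × Fin m)) (S : Set (Fin n × Fin n)) :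
    Set (Set (Fin (m + n) × Fin (m + n))) :=
  {T | ∃ (X Y : Finset (Fin (m + n))) (hX : X.card = m) (hY : Y.card = n),
      IsTotalCut T X Y ∧ restrict T X hX = R ∧ restrict T Y hY = S}

/-- An integer poset: a reflexive, antisymmetric and transitive integer relation. -/
def IsIPos {p : ℕ} (T : Set (Fin p × Fin p)) : Prop :=
  IsIRel T ∧ (∀ a b : Fin p, (a, b) ∈ T → (b, a) ∈ T → a = b) ∧
    ∀ a b c : Fin p, (a, b) ∈ T → (b, c) ∈ T → (a, c) ∈ T

/-- A total order: an integer poset in which any two elements are comparable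
(these are exactly the weak order element posets, `WOEP`). -/
def IsITotal {p : ℕ} (T : Set (Fin p × Fin p)) : Prop :=
  IsIPos T ∧ ∀ a b : Fin p, (a, b) ∈ T ∨ (b, a) ∈ T

/-- `T` admits a primitive cut at `k` (here positions are `0`-indexed, so the
`1`-indexed condition `i ≤ k < j` reads `i < k ≤ j`). -/
def HasPrimitiveCutAt {p : ℕ} (T : Set (Fin p × Fin p)) (k : ℕ) : Prop :=
  ∀ i j : Fin p, (i : ℕ) < k → k ≤ (j : ℕ) → (i, j) ∈ T ∧ (j, i) ∉ T

/-- `T` is under-indecomposable: no non-trivial primitive cut. -/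
def UnderIndecomposable {p : ℕ} (T : Set (Fin p × Fin p)) : Prop :=
  ∀ k : ℕ, 0 < k → k < p → ¬ HasPrimitiveCutAt T k

/-- Membership in `IWOIP`. -/
def InIWOIP {p : ℕ} (T : Set (Fin p × Fin p)) : Prop :=
  IsIPos T ∧ ∀ a b c : Fin p, a < b → b < c → (a, c) ∈ T → (a, b) ∈ T ∨ (b, c) ∈ T

/-- Membership in `DWOIP`. -/
def InDWOIP {p : ℕ} (T : Set (Fin p × Fin p)) : Prop :=
  IsIPos T ∧ ∀ a b c : Fin p, a < b → b < c → (c, a) ∈ T → (b, a) ∈ T ∨ (c, b) ∈ T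

/-- Membership in `WOIP = IWOIP ∩ DWOIP`. -/
def InWOIP {p : ℕ} (T : Set (Fin p × Fin p)) : Prop := InIWOIP T ∧ InDWOIP T

/-- Membership in `WOFP`. -/
def InWOFP {p : ℕ} (T : Set (Fin p × Fin p)) : Prop :=
  InWOIP T ∧ ∀ a b c : Fin p, a < b → b < c → (a, c) ∉ T → (c, a) ∉ T →
    (((a, b) ∈ T ↔ (c, b) ∈ T) ∧ ((b, a) ∈ T ↔ (b, c) ∈ T))

/-- The `IWOIP` increasing deletion. -/
def IWOIPid {p : ℕ} (T : Set (Fin p × Fin p)) : Set (Fin p × Fin p) :=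
  T \ {x | x.1 < x.2 ∧ ∃ l : List (Fin p), l ≠ [] ∧
      List.Chain (fun a b : Fin p => a < b ∧ (a, b) ∉ T) x.1 (l ++ [x.2])}

/-- The `DWOIP` decreasing deletion. -/
def DWOIPdd {p : ℕ} (T : Set (Fin p × Fin p)) : Set (Fin p × Fin p) :=
  T \ {x | x.2 < x.1 ∧ ∃ l : List (Fin p), l ≠ [] ∧
      List.Chain (fun a b : Fin p => a < b ∧ (b, a) ∉ T) x.2 (l ++ [x.1])}

/-- The `WOIP` deletion. -/
def WOIPd {p : ℕ} (T : Set (Fin p × Fin p)) : Set (Fin p × Fin p) :=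
  IWOIPid (DWOIPdd T)

/-- The chain poset `≺_σ` of a permutation: `u ≺_σ v` iff `σ⁻¹ u ≤ σ⁻¹ v`. -/
def chainPoset {p : ℕ} (σ : Equiv.Perm (Fin p)) : Set (Fin p × Fin p) :=
  {x | σ.symm x.1 ≤ σ.symm x.2}

/-- The shifted shuffle of two permutations. -/
def permShiftedShuffle {m n : ℕ} (σ : Equiv.Perm (Fin m)) (τ : Equiv.Perm (Fin n)) :
    Set (Equiv.Perm (Fin (m + n))) :=
  {ρ | (∀ u v : Fin m,
        ρ.symm (Fin.castAdd n u) < ρ.symm (Fin.castAdd n v) ↔ σ.symm u < σ.symm v) ∧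
      ∀ u v : Fin n,
        ρ.symm (Fin.natAdd m u) < ρ.symm (Fin.natAdd m v) ↔ τ.symm u < τ.symm v}

/-- The convolution of two permutations. -/
def permConvolution {m n : ℕ} (σ : Equiv.Perm (Fin m)) (τ : Equiv.Perm (Fin n)) :
    Set (Equiv.Perm (Fin (m + n))) :=
  {ρ | (∀ i j : Fin m, ρ (Fin.castAdd n i) < ρ (Fin.castAdd n j) ↔ σ i < σ j) ∧
      ∀ i j : Fin n, ρ (Fin.natAdd m i) < ρ (Fin.natAdd m j) ↔ τ i < τ j}

/-- Relabelling of a relation along a bijection. -/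
def relabel {p q : ℕ} (e : Fin p ≃ Fin q) (T : Set (Fin p × Fin p)) :
    Set (Fin q × Fin q) :=
  {x | (e.symm x.1, e.symm x.2) ∈ T}

/-- The diagonal `Δ_p`. -/
def diagonal (p : ℕ) : Set (Fin p × Fin p) := {x | x.1 = x.2}


section Aux
variable {m n : ℕ}

lemma eq_castAdd (a : Fin (m + n)) (ha : (a : ℕ) < m) :
    a = Fin.castAdd n ⟨(a : ℕ), ha⟩ := Fin.ext rfl

lemma eq_natAdd (a : Fin (m + n)) (ha : m ≤ (a : ℕ)) :
    a = Fin.natAdd m ⟨(a : ℕ) - m, by have := a.isLt; omega⟩ := by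
  apply Fin.ext
  show (a : ℕ) = m + ((a : ℕ) - m)
  omega

lemma castAdd_lt_castAdd {a b : Fin m} (h : a < b) :
    Fin.castAdd n a < Fin.castAdd n b := by
  simp only [Fin.lt_def, Fin.coe_castAdd]
  exact h

lemma lt_of_castAdd_lt {a b : Fin m} (h : Fin.castAdd n a < Fin.castAdd n b) :
    a < b := by
  simp only [Fin.lt_def, Fin.coe_castAdd] at h
  exact h

lemma natAdd_lt_natAdd {a b : Fin n} (h : a < b) :
    Fin.natAdd m a < Fin.natAdd m b := by
  simp only [Fin.lt_def, Fin.coe_natAdd]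
  omega

lemma lt_of_natAdd_lt {a b : Fin n} (h : Fin.natAdd m a < Fin.natAdd m b) :
    a < b := by
  simp only [Fin.lt_def, Fin.coe_natAdd] at h
  exact Fin.lt_def.mpr (by omega)

lemma mem_shiftL {R : Set (Fin m × Fin m)} {a b : Fin m} :
    (Fin.castAdd n a, Fin.castAdd n b) ∈ shiftL R ↔ (a, b) ∈ R := by
  constructor
  · rintro ⟨⟨y1, y2⟩, hy, he⟩
    rw [Prod.mk.injEq] at he
    have e1 : a = y1 := by
      have h := congrArg Fin.val he.1
      simp only [Fin.coe_castAdd] at h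
      exact Fin.ext h
    have e2 : b = y2 := by
      have h := congrArg Fin.val he.2
      simp only [Fin.coe_castAdd] at h
      exact Fin.ext h
    rw [e1, e2]; exact hy
  · intro h; exact ⟨(a, b), h, rfl⟩

lemma mem_shiftR {S : Set (Fin n × Fin n)} {a b : Fin n} :
    (Fin.natAdd m a, Fin.natAdd m b) ∈ shiftR (m := m) S ↔ (a, b) ∈ S := by
  constructor
  · rintro ⟨⟨y1, y2⟩, hy, he⟩
    rw [Prod.mk.injEq] at he
    have e1 : a = y1 := by
      have h := congrArg Fin.val he.1
      simp only [Fin.coe_natAdd] at h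
      exact Fin.ext (by omega)
    have e2 : b = y2 := by
      have h := congrArg Fin.val he.2
      simp only [Fin.coe_natAdd] at h
      exact Fin.ext (by omega)
    rw [e1, e2]; exact hy
  · intro h; exact ⟨(a, b), h, rfl⟩

lemma shiftL_bounds {R : Set (Fin m × Fin m)} {x : Fin (m + n) × Fin (m + n)}
    (h : x ∈ shiftL R) : (x.1 : ℕ) < m ∧ (x.2 : ℕ) < m := by
  obtain ⟨y, -, rfl⟩ := h
  exact ⟨y.1.isLt, y.2.isLt⟩

lemma shiftR_bounds {S : Set (Fin n × Fin n)} {x : Fin (m + n) × Fin (m + n)}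
    (h : x ∈ shiftR (m := m) S) : m ≤ (x.1 : ℕ) ∧ m ≤ (x.2 : ℕ) := by
  obtain ⟨y, -, rfl⟩ := h
  exact ⟨Nat.le_add_right m _, Nat.le_add_right m _⟩

lemma block_low {R : Set (Fin m × Fin m)} {S : Set (Fin n × Fin n)}
    {W : Set (Fin (m + n) × Fin (m + n))}
    (hW : ∀ x ∈ W, m ≤ (x.1 : ℕ) ∨ m ≤ (x.2 : ℕ)) {a b : Fin m} :
    (Fin.castAdd n a, Fin.castAdd n b) ∈ shiftL R ∪ shiftR S ∪ W ↔ (a, b) ∈ R := by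
  constructor
  · rintro ((h | h) | h)
    · exact mem_shiftL.mp h
    · exfalso
      have h1 := (shiftR_bounds h).1
      simp only [Fin.coe_castAdd] at h1
      exact absurd h1 (by have := a.isLt; omega)
    · exfalso
      rcases hW _ h with h1 | h1 <;> simp only [Fin.coe_castAdd] at h1
      · exact absurd h1 (by have := a.isLt; omega)
      · exact absurd h1 (by have := b.isLt; omega)
  · intro h; exact Or.inl (Or.inl (mem_shiftL.mpr h))

lemma block_high {R : Set (Fin m × Fin m)} {S : Set (Fin n × Fin n)}
    {W : Set (Fin (m + n) × Fin (m + n))}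
    (hW : ∀ x ∈ W, (x.1 : ℕ) < m ∨ (x.2 : ℕ) < m) {a b : Fin n} :
    (Fin.natAdd m a, Fin.natAdd m b) ∈ shiftL R ∪ shiftR S ∪ W ↔ (a, b) ∈ S := by
  constructor
  · rintro ((h | h) | h)
    · exfalso
      have h1 := (shiftL_bounds h).1
      simp only [Fin.coe_natAdd] at h1
      omega
    · exact mem_shiftR.mp h
    · exfalso
      rcases hW _ h with h1 | h1 <;> simp only [Fin.coe_natAdd] at h1 <;> omega
  · intro h; exact Or.inl (Or.inr (mem_shiftR.mpr h))

lemma underprod_low {R : Set (Fin m × Fin m)} {S : Set (Fin n × Fin n)} {a b : Fin m} :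
    (Fin.castAdd n a, Fin.castAdd n b) ∈ underprod R S ↔ (a, b) ∈ R :=
  block_low (fun _ hx => Or.inr hx.2)

lemma underprod_high {R : Set (Fin m × Fin m)} {S : Set (Fin n × Fin n)} {a b : Fin n} :
    (Fin.natAdd m a, Fin.natAdd m b) ∈ underprod R S ↔ (a, b) ∈ S :=
  block_high (fun _ hx => Or.inl hx.1)

lemma overprod_low {R : Set (Fin m × Fin m)} {S : Set (Fin n × Fin n)} {a b : Fin m} :
    (Fin.castAdd n a, Fin.castAdd n b) ∈ overprod R S ↔ (a, b) ∈ R :=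
  block_low (fun _ hx => Or.inl hx.1)

lemma overprod_high {R : Set (Fin m × Fin m)} {S : Set (Fin n × Fin n)} {a b : Fin n} :
    (Fin.natAdd m a, Fin.natAdd m b) ∈ overprod R S ↔ (a, b) ∈ S :=
  block_high (fun _ hx => Or.inr hx.2)

lemma shuffle_low {U : Set (Fin m × Fin m)} {V : Set (Fin n × Fin n)}
    {T : Set (Fin (m + n) × Fin (m + n))} (hT : T ∈ shiftedShuffle U V)
    {a b : Fin m} :
    (Fin.castAdd n a, Fin.castAdd n b) ∈ T ↔ (a, b) ∈ U := by
  obtain ⟨I, D, hI, hD, rfl⟩ := hT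
  constructor
  · rintro (((h | h) | h) | h)
    · exact mem_shiftL.mp h
    · exfalso
      have h1 := (shiftR_bounds h).1
      simp only [Fin.coe_castAdd] at h1
      exact absurd h1 (by have := a.isLt; omega)
    · exfalso
      have h1 := (hI h).2
      simp only [Fin.coe_castAdd] at h1
      exact absurd h1 (by have := b.isLt; omega)
    · exfalso
      have h1 := (hD h).1
      simp only [Fin.coe_castAdd] at h1
      exact absurd h1 (by have := a.isLt; omega)
  · intro h; exact Or.inl (Or.inl (Or.inl (mem_shiftL.mpr h)))

lemma shuffle_high {U : Set (Fin m × Fin m)} {V : Set (Fin n × Fin n)}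
    {T : Set (Fin (m + n) × Fin (m + n))} (hT : T ∈ shiftedShuffle U V)
    {a b : Fin n} :
    (Fin.natAdd m a, Fin.natAdd m b) ∈ T ↔ (a, b) ∈ V := by
  obtain ⟨I, D, hI, hD, rfl⟩ := hT
  constructor
  · rintro (((h | h) | h) | h)
    · exfalso
      have h1 := (shiftL_bounds h).1
      simp only [Fin.coe_natAdd] at h1
      omega
    · exact mem_shiftR.mp h
    · exfalso
      have h1 := (hI h).1
      simp only [Fin.coe_natAdd] at h1
      omega
    · exfalso
      have h1 := (hD h).2
      simp only [Fin.coe_natAdd] at h1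
      omega
  · intro h; exact Or.inl (Or.inl (Or.inr (mem_shiftR.mpr h)))

lemma mem_restrictRange_zero {T : Set (Fin (m + n) × Fin (m + n))}
    {x : Fin m × Fin m} :
    x ∈ restrictRange T 0 m ↔ (Fin.castAdd n x.1, Fin.castAdd n x.2) ∈ T := by
  constructor
  · rintro ⟨h₁, h₂, h⟩
    convert h using 2 <;> exact Fin.ext (by simp)
  · intro h
    refine ⟨by have := x.1.isLt; omega, by have := x.2.isLt; omega, ?_⟩
    convert h using 2 <;> exact Fin.ext (by simp)

lemma mem_restrictRange_natAdd {T : Set (Fin (m + n) × Fin (m + n))}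
    {x : Fin n × Fin n} :
    x ∈ restrictRange T m n ↔ (Fin.natAdd m x.1, Fin.natAdd m x.2) ∈ T := by
  constructor
  · rintro ⟨h₁, h₂, h⟩
    convert h using 2 <;> exact Fin.ext (by simp)
  · intro h
    refine ⟨by have := x.1.isLt; omega, by have := x.2.isLt; omega, ?_⟩
    convert h using 2 <;> exact Fin.ext (by simp)

lemma self_shuffle (T : Set (Fin (m + n) × Fin (m + n))) :
    T ∈ shiftedShuffle (restrictRange T 0 m) (restrictRange T m n) := by
  refine ⟨T ∩ lowHigh m n, T ∩ highLow m n,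
    Set.inter_subset_right, Set.inter_subset_right, ?_⟩
  ext ⟨a, b⟩
  constructor
  · intro h
    by_cases ha : (a : ℕ) < m <;> by_cases hb : (b : ℕ) < m
    · refine Or.inl (Or.inl (Or.inl ?_))
      rw [eq_castAdd a ha, eq_castAdd b hb] at h ⊢
      exact mem_shiftL.mpr (mem_restrictRange_zero.mpr h)
    · exact Or.inl (Or.inr ⟨h, ha, le_of_not_gt hb⟩)
    · exact Or.inr ⟨h, le_of_not_gt ha, hb⟩
    · have ha' := le_of_not_gt ha
      have hb' := le_of_not_gt hb
      refine Or.inl (Or.inl (Or.inr ?_))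
      rw [eq_natAdd a ha', eq_natAdd b hb'] at h ⊢
      exact mem_shiftR.mpr (mem_restrictRange_natAdd.mpr h)
  · rintro (((h | h) | h) | h)
    · obtain ⟨y, hy, he⟩ := h
      rw [Prod.mk.injEq] at he
      obtain ⟨rfl, rfl⟩ := he
      exact mem_restrictRange_zero.mp hy
    · obtain ⟨y, hy, he⟩ := h
      rw [Prod.mk.injEq] at he
      obtain ⟨rfl, rfl⟩ := he
      exact mem_restrictRange_natAdd.mp hy
    · exact h.1
    · exact h.1

end Aux

/-- the product of two weak order intervals is a weak order
interval, and the decomposition is disjoint. -/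
theorem product_of_intervals (m n : ℕ)
    (R R' : Set (Fin m × Fin m)) (S S' : Set (Fin n × Fin n))
    (hR : IsIRel R) (hR' : IsIRel R') (hS : IsIRel S) (hS' : IsIRel S')
    (hRR' : WOle R R') (hSS' : WOle S S') :
    ({T : Set (Fin (m + n) × Fin (m + n)) | IsIRel T ∧
        WOle (underprod R S) T ∧ WOle T (overprod R' S')}
      = ⋃ (U : Set (Fin m × Fin m)) (_ : IsIRel U ∧ WOle R U ∧ WOle U R')
          (V : Set (Fin n × Fin n)) (_ : IsIRel V ∧ WOle S V ∧ WOle V S'),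
          shiftedShuffle U V) ∧
    (∀ T : Set (Fin (m + n) × Fin (m + n)), IsIRel T →
      WOle (underprod R S) T → WOle T (overprod R' S') →
      ∀ (U : Set (Fin m × Fin m)) (V : Set (Fin n × Fin n)),
        IsIRel U → WOle R U → WOle U R' →
        IsIRel V → WOle S V → WOle V S' →
        T ∈ shiftedShuffle U V →
        U = restrictRange T 0 m ∧ V = restrictRange T m n) := by
  constructor
  · ext T
    simp only [Set.mem_setOf_eq, Set.mem_iUnion]
    constructor
    · rintro ⟨hTr, ⟨hi1, hd1⟩, ⟨hi2, hd2⟩⟩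
      refine ⟨restrictRange T 0 m, ⟨?_, ⟨?_, ?_⟩, ⟨?_, ?_⟩⟩,
        restrictRange T m n, ⟨?_, ⟨?_, ?_⟩, ⟨?_, ?_⟩⟩, self_shuffle T⟩
      · intro i
        exact mem_restrictRange_zero.mpr (hTr _)
      · -- inc U ⊆ inc R
        rintro ⟨a, b⟩ ⟨hab, hlt⟩
        have h2 := hi1 ⟨mem_restrictRange_zero.mp hab, castAdd_lt_castAdd hlt⟩
        exact ⟨underprod_low.mp h2.1, hlt⟩
      · -- dec R ⊆ dec U
        rintro ⟨a, b⟩ ⟨hab, hlt⟩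
        have h1 : (Fin.castAdd n a, Fin.castAdd n b) ∈ underprod R S :=
          Or.inl (Or.inl (mem_shiftL.mpr hab))
        exact ⟨mem_restrictRange_zero.mpr (hd1 ⟨h1, castAdd_lt_castAdd hlt⟩).1, hlt⟩
      · -- inc R' ⊆ inc U
        rintro ⟨a, b⟩ ⟨hab, hlt⟩
        have h1 : (Fin.castAdd n a, Fin.castAdd n b) ∈ overprod R' S' :=
          Or.inl (Or.inl (mem_shiftL.mpr hab))
        exact ⟨mem_restrictRange_zero.mpr (hi2 ⟨h1, castAdd_lt_castAdd hlt⟩).1, hlt⟩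
      · -- dec U ⊆ dec R'
        rintro ⟨a, b⟩ ⟨hab, hlt⟩
        have h2 := hd2 ⟨mem_restrictRange_zero.mp hab, castAdd_lt_castAdd hlt⟩
        exact ⟨overprod_low.mp h2.1, hlt⟩
      · intro i
        exact mem_restrictRange_natAdd.mpr (hTr _)
      · -- inc V ⊆ inc S
        rintro ⟨a, b⟩ ⟨hab, hlt⟩
        have h2 := hi1 ⟨mem_restrictRange_natAdd.mp hab, natAdd_lt_natAdd hlt⟩
        exact ⟨underprod_high.mp h2.1, hlt⟩
      · -- dec S ⊆ dec V
        rintro ⟨a, b⟩ ⟨hab, hlt⟩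
        have h1 : (Fin.natAdd m a, Fin.natAdd m b) ∈ underprod R S :=
          Or.inl (Or.inr (mem_shiftR.mpr hab))
        exact ⟨mem_restrictRange_natAdd.mpr (hd1 ⟨h1, natAdd_lt_natAdd hlt⟩).1, hlt⟩
      · -- inc S' ⊆ inc V
        rintro ⟨a, b⟩ ⟨hab, hlt⟩
        have h1 : (Fin.natAdd m a, Fin.natAdd m b) ∈ overprod R' S' :=
          Or.inl (Or.inr (mem_shiftR.mpr hab))
        exact ⟨mem_restrictRange_natAdd.mpr (hi2 ⟨h1, natAdd_lt_natAdd hlt⟩).1, hlt⟩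
      · -- dec V ⊆ dec S'
        rintro ⟨a, b⟩ ⟨hab, hlt⟩
        have h2 := hd2 ⟨mem_restrictRange_natAdd.mp hab, natAdd_lt_natAdd hlt⟩
        exact ⟨overprod_high.mp h2.1, hlt⟩
    · rintro ⟨U, ⟨hU, hRU, hUR'⟩, V, ⟨hV, hSV, hVS'⟩, hTmem⟩
      refine ⟨?_, ⟨?_, ?_⟩, ⟨?_, ?_⟩⟩
      · -- reflexive
        intro i
        by_cases hi : (i : ℕ) < m
        · rw [eq_castAdd i hi]
          exact (shuffle_low hTmem).mpr (hU _)
        · rw [eq_natAdd i (le_of_not_gt hi)]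
          exact (shuffle_high hTmem).mpr (hV _)
      · -- inc T ⊆ inc underprod
        rintro ⟨a, b⟩ ⟨hab, hlt⟩
        refine ⟨?_, hlt⟩
        have hlt' : (a : ℕ) < (b : ℕ) := hlt
        by_cases ha : (a : ℕ) < m
        · by_cases hb : (b : ℕ) < m
          · rw [eq_castAdd a ha, eq_castAdd b hb] at hab ⊢
            have h2 := (shuffle_low hTmem).mp hab
            exact Or.inl (Or.inl (mem_shiftL.mpr
              (hRU.1 ⟨h2, show (⟨(a : ℕ), ha⟩ : Fin m) < ⟨(b : ℕ), hb⟩ from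
                Fin.mk_lt_mk.mpr hlt'⟩).1))
          · exact Or.inr ⟨ha, le_of_not_gt hb⟩
        · have ha' : m ≤ (a : ℕ) := le_of_not_gt ha
          have hb' : m ≤ (b : ℕ) := by omega
          rw [eq_natAdd a ha', eq_natAdd b hb'] at hab ⊢
          have h2 := (shuffle_high hTmem).mp hab
          exact Or.inl (Or.inr (mem_shiftR.mpr
            (hSV.1 ⟨h2, Fin.mk_lt_mk.mpr (by omega)⟩).1))
      · -- dec underprod ⊆ dec T
        rintro ⟨a, b⟩ ⟨hab, hlt⟩
        refine ⟨?_, hlt⟩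
        rcases hab with (h | h) | h
        · obtain ⟨⟨y1, y2⟩, hy, he⟩ := h
          rw [Prod.mk.injEq] at he
          obtain ⟨rfl, rfl⟩ := he
          exact (shuffle_low hTmem).mpr (hRU.2 ⟨hy, lt_of_castAdd_lt hlt⟩).1
        · obtain ⟨⟨y1, y2⟩, hy, he⟩ := h
          rw [Prod.mk.injEq] at he
          obtain ⟨rfl, rfl⟩ := he
          exact (shuffle_high hTmem).mpr (hSV.2 ⟨hy, lt_of_natAdd_lt hlt⟩).1
        · exfalso
          have h1 := h.1
          have h2 := h.2
          have h3 : (b : ℕ) < (a : ℕ) := hlt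
          omega
      · -- inc overprod ⊆ inc T
        rintro ⟨a, b⟩ ⟨hab, hlt⟩
        refine ⟨?_, hlt⟩
        rcases hab with (h | h) | h
        · obtain ⟨⟨y1, y2⟩, hy, he⟩ := h
          rw [Prod.mk.injEq] at he
          obtain ⟨rfl, rfl⟩ := he
          exact (shuffle_low hTmem).mpr (hUR'.1 ⟨hy, lt_of_castAdd_lt hlt⟩).1
        · obtain ⟨⟨y1, y2⟩, hy, he⟩ := h
          rw [Prod.mk.injEq] at he
          obtain ⟨rfl, rfl⟩ := he
          exact (shuffle_high hTmem).mpr (hVS'.1 ⟨hy, lt_of_natAdd_lt hlt⟩).1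
        · exfalso
          have h1 := h.1
          have h2 := h.2
          have h3 : (a : ℕ) < (b : ℕ) := hlt
          omega
      · -- dec T ⊆ dec overprod
        rintro ⟨a, b⟩ ⟨hab, hlt⟩
        refine ⟨?_, hlt⟩
        have hlt' : (b : ℕ) < (a : ℕ) := hlt
        by_cases ha : (a : ℕ) < m
        · have hb : (b : ℕ) < m := by omega
          rw [eq_castAdd a ha, eq_castAdd b hb] at hab ⊢
          have h2 := (shuffle_low hTmem).mp hab
          exact Or.inl (Or.inl (mem_shiftL.mpr
            (hUR'.2 ⟨h2, Fin.mk_lt_mk.mpr hlt'⟩).1))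
        · by_cases hb : (b : ℕ) < m
          · exact Or.inr ⟨le_of_not_gt ha, hb⟩
          · have ha' : m ≤ (a : ℕ) := le_of_not_gt ha
            have hb' : m ≤ (b : ℕ) := le_of_not_gt hb
            rw [eq_natAdd a ha', eq_natAdd b hb'] at hab ⊢
            have h2 := (shuffle_high hTmem).mp hab
            exact Or.inl (Or.inr (mem_shiftR.mpr
              (hVS'.2 ⟨h2, Fin.mk_lt_mk.mpr (by omega)⟩).1))
  · intro T hTr h1 h2 U V hU hRU hUR' hV hSV hVS' hTmem
    constructor
    · ext ⟨a, b⟩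
      exact ⟨fun h => mem_restrictRange_zero.mpr ((shuffle_low hTmem).mpr h),
        fun h => (shuffle_low hTmem).mp (mem_restrictRange_zero.mp h)⟩
    · ext ⟨a, b⟩
      exact ⟨fun h => mem_restrictRange_natAdd.mpr ((shuffle_high hTmem).mpr h),
        fun h => (shuffle_high hTmem).mp (mem_restrictRange_natAdd.mp h)⟩


end IntegerRelations
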